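/- (Noise rate condition: small error of the hinge minimizer under empirical dense pancakes.) Let d, k, n be positive integers with k ≥ 2, let C, σ, γ, τ > 0 with γ/4 > max(τ, Cσ), let η ≤ 1/(2^{12}·k²), α ∈ [0.6/k, 1/k] and ε ∈ (0,1). Let w* ∈ ℝ^{kd} with ‖w*‖₂ ≤ 1. Let I be a finite index set with |I| ≥ n/2 and |I| ≤ n, partitioned into a clean part Cl and a dirty part D with samples (x_i, y_i) ∈ ℝ^d × {1,…,k}, such that: (i) for every i ∈ Cl and every y' ≠ y_i, ⟨w*_{y_i} − w*_{y'}, x_i⟩ ≥ γ; (ii) |D| ≤ ηn, and there exist centers μ_i ∈ ℝ^d (i ∈ D) with ⟨w*_{y_i} − w*_{y'}, μ_i⟩ ≥ γ for every y' ≠ y_i, and ‖Σ_{i∈T}(x_i − μ_i)‖₂ ≤ C·σ·√(|T|·n) for every subset T ⊆ D. Let ŵ be a minimizer of w ↦ Σ_{i∈I} ℓ_γ(w;(x_i,y_i)) over the closed unit ball of ℝ^{kd}. Let μ be a probability measure on ℝ^d × {1,…,k} such that μ( { (x,y) : |{ i ∈ Cl : (x_i,y_i) ∈ P_ŵ^τ(x,y)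 }| ≥ (3α/20)·|I| } ) ≥ 1 − ε. Then μ( { (x,y) : there exists y' ∈ {1,…,k} with ⟨ŵ_{y'}, x⟩ > ⟨ŵ_y, x⟩ } ) ≤ ε; that is, the probability that ŵ misclassifies a point drawn from μ is at most ε. -/

import Mathlib

/-! The reference classifier `w*` bounds the empirical hinge loss of the minimiser `ŵ`. On clean
samples `w*` has margin `γ`, hence zero loss; on a noisy sample its loss is at most
`⟨w*_b - w*_y, x_i - μ_i⟩ / γ` for some label `b`, and summing these deviations fibre by fibre
over the labels (Cauchy–Schwarz) gives at most `2 C σ √(n |D|) / γ ≤ n / (128 k)`.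
If `ŵ` misclassified a point `z` whose pancake holds `(3α/20)|I|` clean samples, each of them
carries the label of `z` and has every score within `τ` of that of `z`, so the wrong label keeps
`ŵ`'s margin below `2τ ≤ γ/2` and costs a loss of at least `1/2`; the total loss would then be at
least `9n / (400 k) > n / (128 k)`. Hence the misclassified set misses the dense set. -/

open scoped BigOperators RealInnerProductSpace
open Finset

/-- The class-sensitive feature map `Ψ : ℝ^d × {1,…,k} → ℝ^{kd}`: the `y`-th block of
`d` coordinates of `Psi d k x y` equals `x`, the remaining coordinates are zero. -/
noncomputable def Psi (d k : ℕ) (x : EuclideanSpace ℝ (Fin d)) (y : Fin k) :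
    EuclideanSpace ℝ (Fin k × Fin d) :=
  WithLp.toLp 2 (fun p : Fin k × Fin d => if p.1 = y then x p.2 else 0)

/-- The `y`-th block `w_y ∈ ℝ^d` of a vector `w ∈ ℝ^{kd}`. -/
noncomputable def block (d k : ℕ) (w : EuclideanSpace ℝ (Fin k × Fin d)) (y : Fin k) :
    EuclideanSpace ℝ (Fin d) :=
  WithLp.toLp 2 (fun j => w (y, j))

/-- The multiclass pancake `P_w^τ(x,y)`: pairs `(x',y')` with `y' = y` and
`|⟨w_ȳ, x' − x⟩| ≤ τ` for every label `ȳ`. -/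
def pancake (d k : ℕ) (w : EuclideanSpace ℝ (Fin k × Fin d)) (τ : ℝ)
    (x : EuclideanSpace ℝ (Fin d)) (y : Fin k) :
    Set (EuclideanSpace ℝ (Fin d) × Fin k) :=
  {p | p.2 = y ∧ ∀ ybar : Fin k, |⟪block d k w ybar, p.1 - x⟫| ≤ τ}

/-- The γ-scaled multiclass hinge loss
`ℓ_γ(w;(x,y)) = max_{y'} (1[y' ≠ y] − (1/γ)·⟨w, Ψ(x,y) − Ψ(x,y')⟩)`. -/
noncomputable def hinge (d k : ℕ) [NeZero k] (γ : ℝ)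
    (w : EuclideanSpace ℝ (Fin k × Fin d)) (x : EuclideanSpace ℝ (Fin d)) (y : Fin k) : ℝ :=
  Finset.univ.sup' Finset.univ_nonempty
    (fun y' : Fin k => (if y' ≠ y then (1:ℝ) else 0) - (1/γ) * ⟪w, Psi d k x y - Psi d k x y'⟫)


section MulticlassHinge

variable {d k : ℕ}

lemma inner_Psi (w : EuclideanSpace ℝ (Fin k × Fin d)) (x : EuclideanSpace ℝ (Fin d))
    (y : Fin k) : ⟪w, Psi d k x y⟫ = ⟪block d k w y, x⟫ := by
  simp only [PiLp.inner_apply, RCLike.inner_apply, conj_trivial, Fintype.sum_prod_type]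
  simp [Psi, block]

lemma sum_norm_block_sq (w : EuclideanSpace ℝ (Fin k × Fin d)) :
    ∑ a, ‖block d k w a‖ ^ 2 = ‖w‖ ^ 2 := by
  simp only [EuclideanSpace.real_norm_sq_eq, Fintype.sum_prod_type, block]

lemma hinge_eq_sup' [NeZero k] (γ : ℝ) (w : EuclideanSpace ℝ (Fin k × Fin d))
    (x : EuclideanSpace ℝ (Fin d)) (y : Fin k) :
    hinge d k γ w x y = univ.sup' univ_nonempty (fun y' : Fin k =>
      (if y' ≠ y then (1 : ℝ) else 0) - (1 / γ) * ⟪block d k w y - block d k w y', x⟫) := by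
  simp only [hinge, inner_sub_right, inner_Psi, inner_sub_left]

lemma hinge_nonneg [NeZero k] (γ : ℝ) (w : EuclideanSpace ℝ (Fin k × Fin d))
    (x : EuclideanSpace ℝ (Fin d)) (y : Fin k) : 0 ≤ hinge d k γ w x y := by
  rw [hinge_eq_sup']
  exact le_trans (by simp) (le_sup' _ (mem_univ y))

lemma exists_hinge_le_of_margin [NeZero k] {γ : ℝ} (hγ : 0 < γ)
    (w : EuclideanSpace ℝ (Fin k × Fin d)) {x m : EuclideanSpace ℝ (Fin d)} {y : Fin k}
    (hm : ∀ y' ≠ y, γ ≤ ⟪block d k w y - block d k w y', m⟫) :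
    ∃ b, hinge d k γ w x y ≤ ⟪block d k w b - block d k w y, x - m⟫ / γ := by
  rw [hinge_eq_sup']
  obtain ⟨b, -, hb⟩ := exists_mem_eq_sup' univ_nonempty (fun y' : Fin k =>
      (if y' ≠ y then (1 : ℝ) else 0) - (1 / γ) * ⟪block d k w y - block d k w y', x⟫)
  refine ⟨b, hb.le.trans ?_⟩
  by_cases hby : b = y
  · simp [hby]
  · have hsplit : ⟪block d k w b - block d k w y, x - m⟫
        = ⟪block d k w y - block d k w b, m⟫ - ⟪block d k w y - block d k w b, x⟫ := by
      rw [← neg_sub (block d k w y), inner_neg_left, inner_sub_right]; ring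
    rw [if_pos hby, hsplit, le_div_iff₀ hγ]
    have := hm b hby
    field_simp
    linarith

lemma half_le_hinge_of_mem_pancake [NeZero k] {γ τ : ℝ} (hγ : 0 < γ) (hτ : 4 * τ ≤ γ)
    {w : EuclideanSpace ℝ (Fin k × Fin d)} {x x' : EuclideanSpace ℝ (Fin d)} {y y' y'' : Fin k}
    (hP : (x', y') ∈ pancake d k w τ x y) (hmis : ⟪block d k w y, x⟫ < ⟪block d k w y'', x⟫) :
    1 / 2 ≤ hinge d k γ w x' y' := by
  obtain ⟨rfl, hband⟩ := hP
  have hne : y'' ≠ y' := fun h => (h ▸ hmis).false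
  rw [hinge_eq_sup']
  refine le_trans ?_ (le_sup' _ (mem_univ y''))
  have h1 := (abs_le.1 (hband y')).2
  have h2 := (abs_le.1 (hband y'')).1
  have hgap : ⟪block d k w y' - block d k w y'', x'⟫ / γ ≤ 1 / 2 := by
    rw [div_le_iff₀ hγ, inner_sub_left]
    rw [inner_sub_right] at h1 h2
    linarith
  rw [if_pos hne, one_div_mul_eq_div]
  linarith

lemma card_filter_pancake_le_two_mul_sum_hinge [NeZero k] {ι : Type*} {γ τ : ℝ} (hγ : 0 < γ)
    (hτ : 4 * τ ≤ γ) (w : EuclideanSpace ℝ (Fin k × Fin d)) {s t : Finset ι} (hts : t ⊆ s)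
    (x : ι → EuclideanSpace ℝ (Fin d)) (y : ι → Fin k) {z : EuclideanSpace ℝ (Fin d) × Fin k}
    {y'' : Fin k} (hmis : ⟪block d k w z.2, z.1⟫ < ⟪block d k w y'', z.1⟫)
    [DecidablePred fun i => (x i, y i) ∈ pancake d k w τ z.1 z.2] :
    (#{i ∈ t | (x i, y i) ∈ pancake d k w τ z.1 z.2} : ℝ)
      ≤ 2 * ∑ i ∈ s, hinge d k γ w (x i) (y i) := by
  set P := {i ∈ t | (x i, y i) ∈ pancake d k w τ z.1 z.2}
  calc (#P : ℝ) = 2 * (#P • (1 / 2 : ℝ)) := by rw [nsmul_eq_mul]; ring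
    _ ≤ 2 * ∑ i ∈ P, hinge d k γ w (x i) (y i) := by
        gcongr
        exact card_nsmul_le_sum _ _ _ fun i hi =>
          half_le_hinge_of_mem_pancake hγ hτ (mem_filter.1 hi).2 hmis
    _ ≤ 2 * ∑ i ∈ s, hinge d k γ w (x i) (y i) := by
        gcongr
        · exact fun i _ _ => hinge_nonneg γ w (x i) (y i)
        · exact (filter_subset _ t).trans hts

lemma isOpen_misclassified (w : EuclideanSpace ℝ (Fin k × Fin d)) :
    IsOpen {z : EuclideanSpace ℝ (Fin d) × Fin k |
      ∃ y', ⟪block d k w z.2, z.1⟫ < ⟪block d k w y', z.1⟫} := by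
  simp only [Set.ofPred_exists]
  refine isOpen_iUnion fun y' => isOpen_lt ?_ (by fun_prop)
  exact ((continuous_of_discreteTopology (f := block d k w)).comp continuous_snd).inner
    continuous_fst

/-- Cauchy–Schwarz across the fibres of the label map `g`: each fibre contributes at most
`‖w_a‖ B √#fibre`, and `∑ₐ ‖w_a‖² = ‖w‖²`, `∑ₐ #fibre = #s`. -/
lemma abs_sum_inner_block_le {ι : Type*} (w : EuclideanSpace ℝ (Fin k × Fin d)) (s : Finset ι)
    (g : ι → Fin k) (v : ι → EuclideanSpace ℝ (Fin d)) {B : ℝ} (hB : 0 ≤ B)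
    (hv : ∀ T ⊆ s, ‖∑ i ∈ T, v i‖ ≤ B * √(#T : ℝ)) :
    |∑ i ∈ s, ⟪block d k w (g i), v i⟫| ≤ ‖w‖ * B * √(#s : ℝ) := by
  classical
  have hfib : ∑ i ∈ s, ⟪block d k w (g i), v i⟫
      = ∑ a, ⟪block d k w a, ∑ i ∈ s with g i = a, v i⟫ := by
    rw [← sum_fiberwise s g]
    refine sum_congr rfl fun a _ => ?_
    rw [inner_sum]
    exact sum_congr rfl fun i hi => by rw [(mem_filter.1 hi).2]
  have hcard : ∑ a, √(#{i ∈ s | g i = a} : ℝ) ^ 2 = #s := by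
    simp only [Real.sq_sqrt (Nat.cast_nonneg _)]
    rw [card_eq_sum_card_fiberwise (fun i _ => mem_univ (g i)), Nat.cast_sum]
  calc |∑ i ∈ s, ⟪block d k w (g i), v i⟫|
      ≤ ∑ a, ‖block d k w a‖ * (B * √(#{i ∈ s | g i = a} : ℝ)) := by
        rw [hfib]
        refine (abs_sum_le_sum_abs _ _).trans (sum_le_sum fun a _ => ?_)
        exact (abs_real_inner_le_norm _ _).trans
          (mul_le_mul_of_nonneg_left (hv _ (filter_subset _ _)) (norm_nonneg _))
    _ = B * ∑ a, ‖block d k w a‖ * √(#{i ∈ s | g i = a} : ℝ) := by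
        rw [mul_sum]; exact sum_congr rfl fun a _ => by ring
    _ ≤ B * (√(∑ a, ‖block d k w a‖ ^ 2) * √(∑ a, √(#{i ∈ s | g i = a} : ℝ) ^ 2)) :=
        mul_le_mul_of_nonneg_left (Real.sum_mul_le_sqrt_mul_sqrt _ _ _) hB
    _ = ‖w‖ * B * √(#s : ℝ) := by
        rw [sum_norm_block_sq, Real.sqrt_sq (norm_nonneg w), hcard]; ring

lemma sum_hinge_le_of_margin [NeZero k] {ι : Type*} {γ : ℝ} (hγ : 0 < γ)
    (w : EuclideanSpace ℝ (Fin k × Fin d)) (s : Finset ι) (x m : ι → EuclideanSpace ℝ (Fin d))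
    (y : ι → Fin k) {B : ℝ} (hB : 0 ≤ B)
    (hm : ∀ i ∈ s, ∀ y' ≠ y i, γ ≤ ⟪block d k w (y i) - block d k w y', m i⟫)
    (hdev : ∀ T ⊆ s, ‖∑ i ∈ T, (x i - m i)‖ ≤ B * √(#T : ℝ)) :
    ∑ i ∈ s, hinge d k γ w (x i) (y i) ≤ 2 * ‖w‖ * B * √(#s : ℝ) / γ := by
  choose! b hb using fun i hi => exists_hinge_le_of_margin hγ w (x := x i) (hm i hi)
  have hb' := abs_le.1 (abs_sum_inner_block_le w s b _ hB hdev)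
  have hy' := abs_le.1 (abs_sum_inner_block_le w s y _ hB hdev)
  calc ∑ i ∈ s, hinge d k γ w (x i) (y i)
      ≤ ∑ i ∈ s, ⟪block d k w (b i) - block d k w (y i), x i - m i⟫ / γ := sum_le_sum hb
    _ = (∑ i ∈ s, ⟪block d k w (b i), x i - m i⟫
          - ∑ i ∈ s, ⟪block d k w (y i), x i - m i⟫) / γ := by
        simp only [← sum_div, inner_sub_left, sum_sub_distrib]
    _ ≤ 2 * ‖w‖ * B * √(#s : ℝ) / γ := by gcongr; linarith [hb'.2, hy'.1]

lemma sum_hinge_union_le [NeZero k] {ι : Type*} [DecidableEq ι] {γ : ℝ} (hγ : 0 < γ)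
    (w : EuclideanSpace ℝ (Fin k × Fin d)) {Cl D : Finset ι} (hClD : Disjoint Cl D)
    (x μc : ι → EuclideanSpace ℝ (Fin d)) (y : ι → Fin k) {B : ℝ} (hB : 0 ≤ B)
    (hmargin : ∀ i ∈ Cl, ∀ y' ≠ y i, γ ≤ ⟪block d k w (y i) - block d k w y', x i⟫)
    (hDmargin : ∀ i ∈ D, ∀ y' ≠ y i, γ ≤ ⟪block d k w (y i) - block d k w y', μc i⟫)
    (hDdev : ∀ T ⊆ D, ‖∑ i ∈ T, (x i - μc i)‖ ≤ B * √(#T : ℝ)) :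
    ∑ i ∈ Cl ∪ D, hinge d k γ w (x i) (y i) ≤ 2 * ‖w‖ * B * √(#D : ℝ) / γ := by
  -- clean samples are their own centres, with zero deviation
  have hclean := sum_hinge_le_of_margin hγ w Cl x x y le_rfl hmargin (by simp)
  have hdirty := sum_hinge_le_of_margin hγ w D x μc y hB hDmargin hDdev
  rw [sum_union hClD]
  simp only [mul_zero, zero_mul, zero_div] at hclean
  linarith

lemma sum_hinge_le_of_noise_rate [NeZero k] {ι : Type*} [DecidableEq ι] {n : ℕ} {C σ γ η : ℝ}
    (hγ : 0 < γ) (hCσ : 0 ≤ C * σ) (hCσγ : 4 * (C * σ) ≤ γ) (hη : η ≤ 1 / (2 ^ 12 * (k : ℝ) ^ 2))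
    (w : EuclideanSpace ℝ (Fin k × Fin d)) (hw : ‖w‖ ≤ 1) {Cl D : Finset ι}
    (hClD : Disjoint Cl D) (x μc : ι → EuclideanSpace ℝ (Fin d)) (y : ι → Fin k)
    (hmargin : ∀ i ∈ Cl, ∀ y' ≠ y i, γ ≤ ⟪block d k w (y i) - block d k w y', x i⟫)
    (hDcard : (#D : ℝ) ≤ η * n)
    (hDmargin : ∀ i ∈ D, ∀ y' ≠ y i, γ ≤ ⟪block d k w (y i) - block d k w y', μc i⟫)
    (hDdev : ∀ T ⊆ D, ‖∑ i ∈ T, (x i - μc i)‖ ≤ C * σ * √(#T * n)) :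
    ∑ i ∈ Cl ∪ D, hinge d k γ w (x i) (y i) ≤ n / (128 * k) := by
  have hsqrtD : √(#D : ℝ) * √n ≤ n / (64 * k) := by
    rw [← Real.sqrt_mul (Nat.cast_nonneg _), ← Real.sqrt_sq (by positivity : 0 ≤ n / (64 * k : ℝ))]
    refine Real.sqrt_le_sqrt ?_
    calc (#D : ℝ) * n ≤ η * n * n := by gcongr
      _ ≤ 1 / (2 ^ 12 * k ^ 2) * n * n := by gcongr
      _ = (n / (64 * k)) ^ 2 := by field_simp; ring
  refine (sum_hinge_union_le hγ w hClD x μc y (by positivity : 0 ≤ C * σ * √n) hmargin hDmargin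
    fun T hT => ?_).trans ?_
  · rw [mul_assoc, ← Real.sqrt_mul' _ (Nat.cast_nonneg _), mul_comm (n : ℝ)]
    exact hDdev T hT
  · rw [div_le_iff₀ hγ]
    calc 2 * ‖w‖ * (C * σ * √n) * √(#D : ℝ) = 2 * ‖w‖ * (C * σ) * (√(#D : ℝ) * √n) := by ring
      _ ≤ 2 * 1 * (γ / 4) * (n / (64 * k)) := by gcongr; linarith
      _ = n / (128 * k) * γ := by field_simp; ring

end MulticlassHinge

lemma measure_le_ofReal_of_le_measure_compl {Ω : Type*} [MeasurableSpace Ω]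
    {μ : MeasureTheory.Measure Ω} [MeasureTheory.IsProbabilityMeasure μ] {s : Set Ω}
    (hs : MeasurableSet s) {ε : ℝ} (hε : ε ≤ 1) (h : ENNReal.ofReal (1 - ε) ≤ μ sᶜ) :
    μ s ≤ ENNReal.ofReal ε := by
  rw [← compl_compl s, MeasureTheory.prob_compl_eq_one_sub hs.compl]
  calc 1 - μ sᶜ ≤ ENNReal.ofReal 1 - ENNReal.ofReal (1 - ε) := by
        rw [ENNReal.ofReal_one]; exact tsub_le_tsub_left h 1
    _ = ENNReal.ofReal ε := by rw [← ENNReal.ofReal_sub _ (by linarith), sub_sub_cancel]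

open scoped Classical in
theorem stmt_17_general {ι : Type*} [DecidableEq ι] (d k n : ℕ) [NeZero k]
    (hn : 0 < n) (C σ γ τ : ℝ) (hC : 0 < C) (hσ : 0 < σ) (hγ : 0 < γ)
    (hγbig : max τ (C * σ) < γ / 4)
    (η : ℝ) (hη : η ≤ 1 / (2^12 * (k : ℝ)^2))
    (α : ℝ) (hα : α ∈ Set.Icc (0.6 / (k : ℝ)) (1 / (k : ℝ)))
    (ε : ℝ) (hε : ε ∈ Set.Ioo (0:ℝ) 1)
    (wstar : EuclideanSpace ℝ (Fin k × Fin d)) (hwstar : ‖wstar‖ ≤ 1)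
    (Cl D : Finset ι) (hClD : Disjoint Cl D)
    (hIlow : (n : ℝ) / 2 ≤ ((Cl ∪ D).card : ℝ))
    (x : ι → EuclideanSpace ℝ (Fin d)) (y : ι → Fin k)
    (hmargin : ∀ i ∈ Cl, ∀ y' : Fin k, y' ≠ y i →
      γ ≤ ⟪block d k wstar (y i) - block d k wstar y', x i⟫)
    (hDcard : (D.card : ℝ) ≤ η * n)
    (μc : ι → EuclideanSpace ℝ (Fin d))
    (hDmargin : ∀ i ∈ D, ∀ y' : Fin k, y' ≠ y i →
      γ ≤ ⟪block d k wstar (y i) - block d k wstar y', μc i⟫)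
    (hDdev : ∀ T ⊆ D, ‖∑ i ∈ T, (x i - μc i)‖ ≤ C * σ * Real.sqrt (T.card * n))
    (what : EuclideanSpace ℝ (Fin k × Fin d))
    (hmin : ∀ w : EuclideanSpace ℝ (Fin k × Fin d), ‖w‖ ≤ 1 →
      ∑ i ∈ Cl ∪ D, hinge d k γ what (x i) (y i) ≤ ∑ i ∈ Cl ∪ D, hinge d k γ w (x i) (y i))
    (μ : MeasureTheory.Measure (EuclideanSpace ℝ (Fin d) × Fin k))
    (hμprob : MeasureTheory.IsProbabilityMeasure μ)
    (hdense : ENNReal.ofReal (1 - ε) ≤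
      μ {z | (3 * α / 20) * (((Cl ∪ D).card : ℕ) : ℝ) ≤
        ((Cl.filter fun i => (x i, y i) ∈ pancake d k what τ z.1 z.2).card : ℝ)}) :
    μ {z | ∃ y' : Fin k, ⟪block d k what z.2, z.1⟫ < ⟪block d k what y', z.1⟫}
      ≤ ENNReal.ofReal ε := by
  have hk : (0 : ℝ) < k := Nat.cast_pos.2 (NeZero.pos k)
  have hτ : 4 * τ ≤ γ := by linarith [le_max_left τ (C * σ)]
  have hCσ : 4 * (C * σ) ≤ γ := by linarith [le_max_right τ (C * σ)]
  have hupper := (hmin wstar hwstar).trans (sum_hinge_le_of_noise_rate hγ (by positivity) hCσ hη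
    wstar hwstar hClD x μc y hmargin hDcard hDmargin hDdev)
  have hdense_sub : {z : EuclideanSpace ℝ (Fin d) × Fin k | (3 * α / 20) * ((#(Cl ∪ D) : ℕ) : ℝ) ≤
      (#(Cl.filter fun i => (x i, y i) ∈ pancake d k what τ z.1 z.2) : ℝ)}
      ⊆ {z | ∃ y' : Fin k, ⟪block d k what z.2, z.1⟫ < ⟪block d k what y', z.1⟫}ᶜ := by
    rintro z hz ⟨y', hmis⟩
    have hlow := card_filter_pancake_le_two_mul_sum_hinge hγ hτ what subset_union_left x y hmis
      (s := Cl ∪ D)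
    have hα0 : 0 ≤ α := (by positivity : (0 : ℝ) ≤ 0.6 / k).trans hα.1
    have hα' : 3 * (0.6 / k) / 20 * (n / 2 : ℝ) ≤ 3 * α / 20 * #(Cl ∪ D) := by
      gcongr
      exact hα.1
    have key : 3 * (0.6 / k) / 20 * (n / 2 : ℝ) ≤ 2 * (n / (128 * k)) := by linarith [hz.out]
    field_simp at key
    linarith
  exact measure_le_ofReal_of_le_measure_compl (isOpen_misclassified what).measurableSet hε.2.le
    (hdense.trans (MeasureTheory.measure_mono hdense_sub))

open scoped Classical in
/-- noise rate condition — small error of the hinge minimizer under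
empirical dense pancakes. -/
theorem stmt_17 {ι : Type*} [DecidableEq ι] (d k n : ℕ) [NeZero k] (hd : 0 < d) (hk : 2 ≤ k)
    (hn : 0 < n) (C σ γ τ : ℝ) (hC : 0 < C) (hσ : 0 < σ) (hγ : 0 < γ) (hτ : 0 < τ)
    (hγbig : max τ (C * σ) < γ / 4)
    (η : ℝ) (hη : η ≤ 1 / (2^12 * (k : ℝ)^2))
    (α : ℝ) (hα : α ∈ Set.Icc (0.6 / (k : ℝ)) (1 / (k : ℝ)))
    (ε : ℝ) (hε : ε ∈ Set.Ioo (0:ℝ) 1)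
    (wstar : EuclideanSpace ℝ (Fin k × Fin d)) (hwstar : ‖wstar‖ ≤ 1)
    (Cl D : Finset ι) (hClD : Disjoint Cl D)
    (hIlow : (n : ℝ) / 2 ≤ ((Cl ∪ D).card : ℝ)) (hIhigh : ((Cl ∪ D).card : ℝ) ≤ n)
    (x : ι → EuclideanSpace ℝ (Fin d)) (y : ι → Fin k)
    (hmargin : ∀ i ∈ Cl, ∀ y' : Fin k, y' ≠ y i →
      γ ≤ ⟪block d k wstar (y i) - block d k wstar y', x i⟫)
    (hDcard : (D.card : ℝ) ≤ η * n)
    (μc : ι → EuclideanSpace ℝ (Fin d))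
    (hDmargin : ∀ i ∈ D, ∀ y' : Fin k, y' ≠ y i →
      γ ≤ ⟪block d k wstar (y i) - block d k wstar y', μc i⟫)
    (hDdev : ∀ T ⊆ D, ‖∑ i ∈ T, (x i - μc i)‖ ≤ C * σ * Real.sqrt (T.card * n))
    (what : EuclideanSpace ℝ (Fin k × Fin d)) (hwhat : ‖what‖ ≤ 1)
    (hmin : ∀ w : EuclideanSpace ℝ (Fin k × Fin d), ‖w‖ ≤ 1 →
      ∑ i ∈ Cl ∪ D, hinge d k γ what (x i) (y i) ≤ ∑ i ∈ Cl ∪ D, hinge d k γ w (x i) (y i))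
    (μ : MeasureTheory.Measure (EuclideanSpace ℝ (Fin d) × Fin k))
    (hμprob : MeasureTheory.IsProbabilityMeasure μ)
    (hdense : ENNReal.ofReal (1 - ε) ≤
      μ {z | (3 * α / 20) * (((Cl ∪ D).card : ℕ) : ℝ) ≤
        ((Cl.filter fun i => (x i, y i) ∈ pancake d k what τ z.1 z.2).card : ℝ)}) :
    μ {z | ∃ y' : Fin k, ⟪block d k what z.2, z.1⟫ < ⟪block d k what y', z.1⟫}
      ≤ ENNReal.ofReal ε :=
  stmt_17_general d k n hn C σ γ τ hC hσ hγ hγbig η hη α hα ε hε wstar hwstar Cl D hClD hIlow x y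
    hmargin hDcard μc hDmargin hDdev what hmin μ hμprob hdense
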